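/- arXiv:1909.12130 — 5 statements merged into one kernel-verified Lean document; each statement's English description precedes it below -/
import Mathlib

section
/- For all complex numbers α, β and each k ∈ {1,2,3} with {i,j,k} = {1,2,3}, one has E_k⁺·E_k⁻ = E_i·E_j and E = −4·E_k⁺·E_k⁻·E_k, where E_k^± = √2·i·E_k ± 3V_iV_j. -/
theorem Ek_pm_products (α β : ℂ)
    (V₁ V₂ V₃ E₁ E₂ E₃ E : ℂ)
    (hV₁ : V₁ = 2 * Complex.I * α * β)
    (hV₂ : V₂ = Complex.I * (α ^ 2 - β ^ 2))
    (hV₃ : V₃ = α ^ 2 + β ^ 2)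
    (hE₁ : E₁ = V₂ ^ 2 - V₃ ^ 2)
    (hE₂ : E₂ = V₃ ^ 2 - V₁ ^ 2)
    (hE₃ : E₃ = V₁ ^ 2 - V₂ ^ 2)
    (hE : E = 8 * (α ^ 12 - 33 * α ^ 8 * β ^ 4 - 33 * α ^ 4 * β ^ 8 + β ^ 12))
    (E₁p E₁m E₂p E₂m E₃p E₃m : ℂ)
    (hE₁p : E₁p = (Real.sqrt 2 : ℂ) * Complex.I * E₁ + 3 * V₂ * V₃)
    (hE₁m : E₁m = (Real.sqrt 2 : ℂ) * Complex.I * E₁ - 3 * V₂ * V₃)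
    (hE₂p : E₂p = (Real.sqrt 2 : ℂ) * Complex.I * E₂ + 3 * V₁ * V₃)
    (hE₂m : E₂m = (Real.sqrt 2 : ℂ) * Complex.I * E₂ - 3 * V₁ * V₃)
    (hE₃p : E₃p = (Real.sqrt 2 : ℂ) * Complex.I * E₃ + 3 * V₁ * V₂)
    (hE₃m : E₃m = (Real.sqrt 2 : ℂ) * Complex.I * E₃ - 3 * V₁ * V₂) :
    (E₁p * E₁m = E₂ * E₃ ∧ E = -4 * E₁p * E₁m * E₁) ∧
    (E₂p * E₂m = E₁ * E₃ ∧ E = -4 * E₂p * E₂m * E₂) ∧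
    (E₃p * E₃m = E₁ * E₂ ∧ E = -4 * E₃p * E₃m * E₃) := by
  have hs : ((Real.sqrt 2 : ℂ)) ^ 2 = 2 := by
    norm_cast
    exact Real.sq_sqrt (by norm_num)
  have key : ∀ a b : ℂ, ((Real.sqrt 2 : ℂ) * Complex.I * a + 3 * b) *
      ((Real.sqrt 2 : ℂ) * Complex.I * a - 3 * b) = -2 * a ^ 2 - 9 * b ^ 2 := by
    intro a b
    linear_combination Complex.I ^ 2 * a ^ 2 * hs + 2 * a ^ 2 * Complex.I_sq
  have h1 : V₁ ^ 2 = -4 * α ^ 2 * β ^ 2 := by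
    rw [hV₁]; linear_combination 4 * α ^ 2 * β ^ 2 * Complex.I_sq
  have h2 : V₂ ^ 2 = -(α ^ 2 - β ^ 2) ^ 2 := by
    rw [hV₂]; linear_combination (α ^ 2 - β ^ 2) ^ 2 * Complex.I_sq
  have h12 : (V₁ * V₂) ^ 2 = 4 * α ^ 2 * β ^ 2 * (α ^ 2 - β ^ 2) ^ 2 := by
    rw [mul_pow, h1, h2]; ring
  have h13 : (V₁ * V₃) ^ 2 = -4 * α ^ 2 * β ^ 2 * (α ^ 2 + β ^ 2) ^ 2 := by
    rw [mul_pow, h1, hV₃]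
  have h23 : (V₂ * V₃) ^ 2 = -(α ^ 2 - β ^ 2) ^ 2 * (α ^ 2 + β ^ 2) ^ 2 := by
    rw [mul_pow, h2, hV₃]
  have hE₁' : E₁ = -(α ^ 2 - β ^ 2) ^ 2 - (α ^ 2 + β ^ 2) ^ 2 := by
    rw [hE₁, h2, hV₃]
  have hE₂' : E₂ = (α ^ 2 + β ^ 2) ^ 2 + 4 * α ^ 2 * β ^ 2 := by
    rw [hE₂, h1, hV₃]; ring
  have hE₃' : E₃ = -4 * α ^ 2 * β ^ 2 + (α ^ 2 - β ^ 2) ^ 2 := by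
    rw [hE₃, h1, h2]; ring
  have q1 : E₁p * E₁m = -2 * (-(α ^ 2 - β ^ 2) ^ 2 - (α ^ 2 + β ^ 2) ^ 2) ^ 2
      - 9 * (-(α ^ 2 - β ^ 2) ^ 2 * (α ^ 2 + β ^ 2) ^ 2) := by
    rw [hE₁p, hE₁m]
    linear_combination key E₁ (V₂ * V₃) - 9 * h23
      + (-2 * (E₁ + (-(α ^ 2 - β ^ 2) ^ 2 - (α ^ 2 + β ^ 2) ^ 2))) * hE₁'
  have q2 : E₂p * E₂m = -2 * ((α ^ 2 + β ^ 2) ^ 2 + 4 * α ^ 2 * β ^ 2) ^ 2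
      - 9 * (-4 * α ^ 2 * β ^ 2 * (α ^ 2 + β ^ 2) ^ 2) := by
    rw [hE₂p, hE₂m]
    linear_combination key E₂ (V₁ * V₃) - 9 * h13
      + (-2 * (E₂ + ((α ^ 2 + β ^ 2) ^ 2 + 4 * α ^ 2 * β ^ 2))) * hE₂'
  have q3 : E₃p * E₃m = -2 * (-4 * α ^ 2 * β ^ 2 + (α ^ 2 - β ^ 2) ^ 2) ^ 2
      - 9 * (4 * α ^ 2 * β ^ 2 * (α ^ 2 - β ^ 2) ^ 2) := by
    rw [hE₃p, hE₃m]
    linear_combination key E₃ (V₁ * V₂) - 9 * h12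
      + (-2 * (E₃ + (-4 * α ^ 2 * β ^ 2 + (α ^ 2 - β ^ 2) ^ 2))) * hE₃'
  refine ⟨⟨?_, ?_⟩, ⟨?_, ?_⟩, ?_, ?_⟩
  · rw [hE₂', hE₃']; linear_combination q1
  · rw [hE]
    linear_combination 4 * E₁ * q1
      + (4 * (-2 * (-(α ^ 2 - β ^ 2) ^ 2 - (α ^ 2 + β ^ 2) ^ 2) ^ 2
        - 9 * (-(α ^ 2 - β ^ 2) ^ 2 * (α ^ 2 + β ^ 2) ^ 2))) * hE₁'
  · rw [hE₁', hE₃']; linear_combination q2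
  · rw [hE]
    linear_combination 4 * E₂ * q2
      + (4 * (-2 * ((α ^ 2 + β ^ 2) ^ 2 + 4 * α ^ 2 * β ^ 2) ^ 2
        - 9 * (-4 * α ^ 2 * β ^ 2 * (α ^ 2 + β ^ 2) ^ 2))) * hE₂'
  · rw [hE₁', hE₂']; linear_combination q3
  · rw [hE]
    linear_combination 4 * E₃ * q3
      + (4 * (-2 * (-4 * α ^ 2 * β ^ 2 + (α ^ 2 - β ^ 2) ^ 2) ^ 2
        - 9 * (4 * α ^ 2 * β ^ 2 * (α ^ 2 - β ^ 2) ^ 2))) * hE₃'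
end

section
/- For all complex numbers α, β with E ≠ 0 and E_k⁻ ≠ 0, the ratio x = E_k⁺/E_k⁻ satisfies the monic sextic equation (x²+10x+1)³ − 3·12²·J₀·x²(x²+10x+1) + 2·12³·J₀·x³ = 0, where J₀ = F³/E². -/
set_option maxHeartbeats 1000000 in
lemma sextic_aux (p m E F J : ℂ) (hm : m ≠ 0) (hE : E ≠ 0) (hJ : J = F ^ 3 / E ^ 2)
    (key : (p ^ 2 + 10 * p * m + m ^ 2) ^ 3 * E ^ 2
      - 432 * F ^ 3 * (p * m) ^ 2 * (p ^ 2 + 10 * p * m + m ^ 2)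
      + 3456 * F ^ 3 * (p * m) ^ 3 = 0) :
    ((p / m) ^ 2 + 10 * (p / m) + 1) ^ 3
      - 3 * 12 ^ 2 * J * (p / m) ^ 2 * ((p / m) ^ 2 + 10 * (p / m) + 1)
      + 2 * 12 ^ 3 * J * (p / m) ^ 3 = 0 := by
  have hm6 : m ^ 6 ≠ 0 := pow_ne_zero _ hm
  have hE2 : E ^ 2 ≠ 0 := pow_ne_zero _ hE
  have hJE : J * E ^ 2 = F ^ 3 := by rw [hJ]; field_simp
  obtain ⟨x, rfl⟩ : ∃ x, p = x * m := ⟨p / m, (div_mul_cancel₀ _ hm).symm⟩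
  rw [mul_div_cancel_right₀ _ hm]
  have key2 : (x ^ 2 + 10 * x + 1) ^ 3 * E ^ 2
      - 432 * F ^ 3 * x ^ 2 * (x ^ 2 + 10 * x + 1)
      + 3456 * F ^ 3 * x ^ 3 = 0 := by
    apply mul_right_cancel₀ hm6
    rw [zero_mul]
    linear_combination key
  apply mul_right_cancel₀ hE2
  rw [zero_mul]
  linear_combination key2 + (3456 * x ^ 3 - 432 * x ^ 2 * (x ^ 2 + 10 * x + 1)) * hJE

set_option maxHeartbeats 4000000 in
theorem Ek_ratio_sextic (α β : ℂ)
    (V₁ V₂ V₃ E₁ E₂ E₃ E F J₀ : ℂ)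
    (hV₁ : V₁ = 2 * Complex.I * α * β)
    (hV₂ : V₂ = Complex.I * (α ^ 2 - β ^ 2))
    (hV₃ : V₃ = α ^ 2 + β ^ 2)
    (hE₁ : E₁ = V₂ ^ 2 - V₃ ^ 2)
    (hE₂ : E₂ = V₃ ^ 2 - V₁ ^ 2)
    (hE₃ : E₃ = V₁ ^ 2 - V₂ ^ 2)
    (hE : E = 8 * (α ^ 12 - 33 * α ^ 8 * β ^ 4 - 33 * α ^ 4 * β ^ 8 + β ^ 12))
    (hF : F = 4 * (α ^ 8 + 14 * α ^ 4 * β ^ 4 + β ^ 8))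
    (hJ : J₀ = F ^ 3 / E ^ 2)
    (E₁p E₁m E₂p E₂m E₃p E₃m : ℂ)
    (hE₁p : E₁p = (Real.sqrt 2 : ℂ) * Complex.I * E₁ + 3 * V₂ * V₃)
    (hE₁m : E₁m = (Real.sqrt 2 : ℂ) * Complex.I * E₁ - 3 * V₂ * V₃)
    (hE₂p : E₂p = (Real.sqrt 2 : ℂ) * Complex.I * E₂ + 3 * V₁ * V₃)
    (hE₂m : E₂m = (Real.sqrt 2 : ℂ) * Complex.I * E₂ - 3 * V₁ * V₃)
    (hE₃p : E₃p = (Real.sqrt 2 : ℂ) * Complex.I * E₃ + 3 * V₁ * V₂)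
    (hE₃m : E₃m = (Real.sqrt 2 : ℂ) * Complex.I * E₃ - 3 * V₁ * V₂)
    (hE0 : E ≠ 0)
    (h1m : E₁m ≠ 0) (h2m : E₂m ≠ 0) (h3m : E₃m ≠ 0) :
    ∀ x ∈ ({E₁p / E₁m, E₂p / E₂m, E₃p / E₃m} : Set ℂ),
      (x ^ 2 + 10 * x + 1) ^ 3
        - 3 * 12 ^ 2 * J₀ * x ^ 2 * (x ^ 2 + 10 * x + 1)
        + 2 * 12 ^ 3 * J₀ * x ^ 3 = 0 := by
  have ht : ((Real.sqrt 2 : ℂ) * Complex.I) ^ 2 = -2 := by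
    rw [mul_pow, Complex.I_sq]
    norm_cast
    rw [Real.sq_sqrt (by norm_num : (0:ℝ) ≤ 2)]
    norm_num
  have hV1sq : V₁ ^ 2 = -4 * α ^ 2 * β ^ 2 := by
    rw [hV₁]; linear_combination (4 * α ^ 2 * β ^ 2) * Complex.I_sq
  have hV2sq : V₂ ^ 2 = -(α ^ 2 - β ^ 2) ^ 2 := by
    rw [hV₂]; linear_combination (α ^ 2 - β ^ 2) ^ 2 * Complex.I_sq
  intro x hx
  rcases hx with hx | hx | hx <;> rw [hx]
  · refine sextic_aux _ _ _ _ _ h1m hE0 hJ ?_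
    have hA : E₁p ^ 2 + 10 * E₁p * E₁m + E₁m ^ 2 = -24 * E₁ ^ 2 - 72 * (V₂ ^ 2 * V₃ ^ 2) := by
      rw [hE₁p, hE₁m]; linear_combination 12 * E₁ ^ 2 * ht
    have hP : E₁p * E₁m = -2 * E₁ ^ 2 - 9 * (V₂ ^ 2 * V₃ ^ 2) := by
      rw [hE₁p, hE₁m]; linear_combination E₁ ^ 2 * ht
    rw [hA, hP, hE₁, hV2sq, hV₃, hE, hF]
    ring
  · refine sextic_aux _ _ _ _ _ h2m hE0 hJ ?_
    have hA : E₂p ^ 2 + 10 * E₂p * E₂m + E₂m ^ 2 = -24 * E₂ ^ 2 - 72 * (V₁ ^ 2 * V₃ ^ 2) := by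
      rw [hE₂p, hE₂m]; linear_combination 12 * E₂ ^ 2 * ht
    have hP : E₂p * E₂m = -2 * E₂ ^ 2 - 9 * (V₁ ^ 2 * V₃ ^ 2) := by
      rw [hE₂p, hE₂m]; linear_combination E₂ ^ 2 * ht
    rw [hA, hP, hE₂, hV1sq, hV₃, hE, hF]
    ring
  · refine sextic_aux _ _ _ _ _ h3m hE0 hJ ?_
    have hA : E₃p ^ 2 + 10 * E₃p * E₃m + E₃m ^ 2 = -24 * E₃ ^ 2 - 72 * (V₁ ^ 2 * V₂ ^ 2) := by
      rw [hE₃p, hE₃m]; linear_combination 12 * E₃ ^ 2 * ht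
    have hP : E₃p * E₃m = -2 * E₃ ^ 2 - 9 * (V₁ ^ 2 * V₂ ^ 2) := by
      rw [hE₃p, hE₃m]; linear_combination E₃ ^ 2 * ht
    rw [hA, hP, hE₃, hV1sq, hV2sq, hE, hF]
    ring
end

section
/- For all complex numbers α, β with E ≠ 0, J₀ = F³/E² equals −4(V₁²V₂² + V₁²V₃² + V₂²V₃²)³ / [(V₁²−V₂²)²(V₁²−V₃²)²(V₂²−V₃²)²]. -/
theorem J0_in_terms_of_V (α β : ℂ)
    (V₁ V₂ V₃ E F J₀ : ℂ)
    (hV₁ : V₁ = 2 * Complex.I * α * β)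
    (hV₂ : V₂ = Complex.I * (α ^ 2 - β ^ 2))
    (hV₃ : V₃ = α ^ 2 + β ^ 2)
    (hE : E = 8 * (α ^ 12 - 33 * α ^ 8 * β ^ 4 - 33 * α ^ 4 * β ^ 8 + β ^ 12))
    (hF : F = 4 * (α ^ 8 + 14 * α ^ 4 * β ^ 4 + β ^ 8))
    (hJ : J₀ = F ^ 3 / E ^ 2)
    (hE0 : E ≠ 0) :
    J₀ = -4 * (V₁ ^ 2 * V₂ ^ 2 + V₁ ^ 2 * V₃ ^ 2 + V₂ ^ 2 * V₃ ^ 2) ^ 3 /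
      ((V₁ ^ 2 - V₂ ^ 2) ^ 2 * (V₁ ^ 2 - V₃ ^ 2) ^ 2 * (V₂ ^ 2 - V₃ ^ 2) ^ 2) := by
  have h1 : V₁ ^ 2 = -(4 * α ^ 2 * β ^ 2) := by
    rw [hV₁]; linear_combination (4 * α ^ 2 * β ^ 2) * Complex.I_sq
  have h2 : V₂ ^ 2 = -((α ^ 2 - β ^ 2) ^ 2) := by
    rw [hV₂]; linear_combination ((α ^ 2 - β ^ 2) ^ 2) * Complex.I_sq
  have hden : (V₁ ^ 2 - V₂ ^ 2) ^ 2 * (V₁ ^ 2 - V₃ ^ 2) ^ 2 * (V₂ ^ 2 - V₃ ^ 2) ^ 2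
      = E ^ 2 / 16 := by
    rw [h1, h2, hV₃, hE]; ring
  have hnum : -4 * (V₁ ^ 2 * V₂ ^ 2 + V₁ ^ 2 * V₃ ^ 2 + V₂ ^ 2 * V₃ ^ 2) ^ 3
      = F ^ 3 / 16 := by
    rw [h1, h2, hV₃, hF]; ring
  rw [hJ, hnum, hden]
  have hE2 : E ^ 2 ≠ 0 := pow_ne_zero _ hE0
  field_simp
end

section
/- For all complex numbers α, β with V₁V₂V₃ ≠ 0, setting ξ₁ = F/(4(V₂V₃)²), ξ₂ = F/(4(V₁V₃)²), ξ₃ = F/(4(V₁V₂)²), one has ξ₁ + ξ₂ + ξ₃ = 0, and if moreover E ≠ 0 and J₀ ≠ 1 then ξ₁ξ₂ξ₃ = (27/4)·J₀/(J₀−1) and ξ₁ξ₂ξ₃ = ξ_k³/(ξ_k+1) for each k (provided ξ_k ≠ −1). -/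
/-!
The squares `a = V₁², b = V₂², c = V₃²` satisfy `a + b + c = 0`, and in terms of them
`F = 4s` with `s = -(ab + bc + ca)` and `E = 4(a - b)(b - c)(a - c)`. Hence `ξ₁ = s / (bc)`,
etc., so the `ξ_k` sum to `s (a + b + c) / (abc) = 0` and their product is `s³ / (abc)²`.
Since `s + bc = a² - a (a + b + c) = a²`, we get `ξ₁ + 1 = a² / (bc)`, so
`ξ₁³ / (ξ₁ + 1) = s³ / (abc)²` as well. Finally, the discriminant of the cubic with roots
`a, b, c` gives `F³ - E² = 432 (abc)²`, and `J₀ / (J₀ - 1) = F³ / (F³ - E²)`.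
-/

section

variable {K : Type*} [Field K] {a b c : K}

theorem div_mul_add_div_mul_add_div_mul_eq_zero (s : K) (ha : a ≠ 0) (hb : b ≠ 0) (hc : c ≠ 0)
    (h : a + b + c = 0) : s / (b * c) + s / (a * c) + s / (a * b) = 0 := by
  field_simp
  linear_combination s * h

theorem div_mul_mul_div_mul_mul_div_mul_eq (s : K) (ha : a ≠ 0) (hb : b ≠ 0) (hc : c ≠ 0) :
    s / (b * c) * (s / (a * c)) * (s / (a * b)) = s ^ 3 / (a * b * c) ^ 2 := by
  field_simp

theorem div_mul_pow_three_div_add_one_eq {s : K} (ha : a ≠ 0) (hb : b ≠ 0) (hc : c ≠ 0)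
    (h : s + b * c = a ^ 2) :
    (s / (b * c)) ^ 3 / (s / (b * c) + 1) = s ^ 3 / (a * b * c) ^ 2 := by
  have h_add_one : s / (b * c) + 1 = a ^ 2 / (b * c) := by
    field_simp
    exact h
  rw [h_add_one]
  field_simp

theorem sq_vandermonde_of_add_add_eq_zero (h : a + b + c = 0) :
    ((a - b) * (b - c) * (a - c)) ^ 2 =
      -4 * (a * b + b * c + c * a) ^ 3 - 27 * (a * b * c) ^ 2 := by
  obtain rfl : c = -a - b := by linear_combination h
  ring

end

theorem mul_div_div_sub_one_eq_pow_three_div_sq {K : Type*} [Field K] [CharZero K] {E F s d : K}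
    (hE : E ≠ 0) (hd : d ≠ 0) (hF : F = 4 * s) (h : F ^ 3 - E ^ 2 = 432 * d ^ 2) :
    27 / 4 * (F ^ 3 / E ^ 2 / (F ^ 3 / E ^ 2 - 1)) = s ^ 3 / d ^ 2 := by
  have hE2 := pow_ne_zero 2 hE
  rw [div_sub_one hE2, div_div_div_cancel_right₀ hE2, h, hF]
  field_simp
  ring

theorem xi_relations (α β : ℂ)
    (V₁ V₂ V₃ E F J₀ ξ₁ ξ₂ ξ₃ : ℂ)
    (hV₁ : V₁ = 2 * Complex.I * α * β)
    (hV₂ : V₂ = Complex.I * (α ^ 2 - β ^ 2))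
    (hV₃ : V₃ = α ^ 2 + β ^ 2)
    (hE : E = 8 * (α ^ 12 - 33 * α ^ 8 * β ^ 4 - 33 * α ^ 4 * β ^ 8 + β ^ 12))
    (hF : F = 4 * (α ^ 8 + 14 * α ^ 4 * β ^ 4 + β ^ 8))
    (hJ : J₀ = F ^ 3 / E ^ 2)
    (hV : V₁ * V₂ * V₃ ≠ 0)
    (hξ₁ : ξ₁ = F / (4 * (V₂ * V₃) ^ 2))
    (hξ₂ : ξ₂ = F / (4 * (V₁ * V₃) ^ 2))
    (hξ₃ : ξ₃ = F / (4 * (V₁ * V₂) ^ 2)) :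
    ξ₁ + ξ₂ + ξ₃ = 0 ∧
    (E ≠ 0 → J₀ ≠ 1 →
      (ξ₁ * ξ₂ * ξ₃ = 27 / 4 * (J₀ / (J₀ - 1)) ∧
       (∀ ξ ∈ ({ξ₁, ξ₂, ξ₃} : Set ℂ), ξ ≠ -1 →
          ξ₁ * ξ₂ * ξ₃ = ξ ^ 3 / (ξ + 1)))) := by
  obtain ⟨⟨h₁, h₂⟩, h₃⟩ : (V₁ ^ 2 ≠ 0 ∧ V₂ ^ 2 ≠ 0) ∧ V₃ ^ 2 ≠ 0 := by
    simpa only [mul_ne_zero_iff, ne_eq, pow_eq_zero_iff two_ne_zero] using hV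
  have ha : V₁ ^ 2 = -4 * α ^ 2 * β ^ 2 := by
    rw [hV₁]; linear_combination 4 * α ^ 2 * β ^ 2 * Complex.I_sq
  have hb : V₂ ^ 2 = -(α ^ 2 - β ^ 2) ^ 2 := by
    rw [hV₂]; linear_combination (α ^ 2 - β ^ 2) ^ 2 * Complex.I_sq
  have hsum : V₁ ^ 2 + V₂ ^ 2 + V₃ ^ 2 = 0 := by rw [ha, hb, hV₃]; ring
  set s := -(V₁ ^ 2 * V₂ ^ 2 + V₂ ^ 2 * V₃ ^ 2 + V₃ ^ 2 * V₁ ^ 2) with hs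
  have hFs : F = 4 * s := by rw [hF, hs, ha, hb, hV₃]; ring
  have hEv : E = 4 * ((V₁ ^ 2 - V₂ ^ 2) * (V₂ ^ 2 - V₃ ^ 2) * (V₁ ^ 2 - V₃ ^ 2)) := by
    rw [hE, ha, hb, hV₃]; ring
  have hdisc : F ^ 3 - E ^ 2 = 432 * (V₁ ^ 2 * V₂ ^ 2 * V₃ ^ 2) ^ 2 := by
    rw [hFs, hEv, hs]
    linear_combination -16 * sq_vandermonde_of_add_add_eq_zero hsum
  have hξ (p q : ℂ) : F / (4 * (p * q) ^ 2) = s / (p ^ 2 * q ^ 2) := by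
    rw [hFs, mul_pow, mul_div_mul_left _ _ (by norm_num : (4 : ℂ) ≠ 0)]
  rw [hξ] at hξ₁ hξ₂ hξ₃
  subst hξ₁ hξ₂ hξ₃
  have hprod := div_mul_mul_div_mul_mul_div_mul_eq s h₁ h₂ h₃
  refine ⟨div_mul_add_div_mul_add_div_mul_eq_zero s h₁ h₂ h₃ hsum, fun hE0 _ => ⟨?_, ?_⟩⟩
  · rw [hprod, hJ, mul_div_div_sub_one_eq_pow_three_div_sq hE0
      (mul_ne_zero (mul_ne_zero h₁ h₂) h₃) hFs hdisc]
  · rintro ξ (rfl | rfl | rfl) -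
    · rw [hprod, div_mul_pow_three_div_add_one_eq h₁ h₂ h₃
        (by linear_combination -V₁ ^ 2 * hsum)]
    · rw [hprod, div_mul_pow_three_div_add_one_eq h₂ h₁ h₃
        (by linear_combination -V₂ ^ 2 * hsum)]
      ring
    · rw [hprod, div_mul_pow_three_div_add_one_eq h₃ h₁ h₂
        (by linear_combination -V₃ ^ 2 * hsum)]
      ring
end

section
/- For all complex numbers α, β with E ≠ 0, J₀ ≠ 1, and V₁V₂V₃ ≠ 0, each ξ_k = F/(4(V_iV_j)²) satisfies the cubic equation 4ξ³ − (27J₀/(J₀−1))·ξ − 27J₀/(J₀−1) = 0, where J₀ = F³/E². -/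
/-!
Write `W` for one of the squares `(V_i V_j)²`. Each of them is a root of
`432 W³ + 108 F W² - (F³ - E²)`, a form of the syzygy between the octahedral invariants.
Since `ξ = F / (4 W)` and `27 J₀ / (J₀ - 1) = 27 F³ / (F³ - E²)`, substituting this relation
turns the cubic in `ξ` into an identity of rational functions.
-/

theorem cubic_of_syzygy {K : Type*} [Field K] {E F J W ξ : K} (hE : E ≠ 0)
    (hJ : J = F ^ 3 / E ^ 2) (hJ1 : J ≠ 1) (hW : F ^ 3 - E ^ 2 = 108 * W ^ 2 * (F + 4 * W))
    (hξ : ξ = F / (4 * W)) :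
    4 * ξ ^ 3 - 27 * J / (J - 1) * ξ - 27 * J / (J - 1) = 0 := by
  have hE2 : E ^ 2 ≠ 0 := pow_ne_zero 2 hE
  have hFE : F ^ 3 - E ^ 2 ≠ 0 := fun h =>
    hJ1 (by rw [hJ, div_eq_one_iff_eq hE2]; linear_combination h)
  rw [hW] at hFE
  have h108 : (108 : K) ≠ 0 := by contrapose! hFE; rw [hFE]; ring
  have h4 : (4 : K) ≠ 0 := fun h => h108 (by linear_combination 27 * h)
  have hW0 : W ≠ 0 := by rintro rfl; simp at hFE
  have hFW : F + 4 * W ≠ 0 := right_ne_zero_of_mul hFE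
  have hc : 27 * J / (J - 1) = F ^ 3 / (4 * W ^ 2 * (F + 4 * W)) := by
    rw [hJ, div_sub_one hE2, mul_div_assoc', div_div_div_cancel_right₀ hE2, hW]
    field_simp
    ring
  rw [hc, hξ]
  field_simp
  ring

theorem octahedral_syzygy {R : Type*} [CommRing R] {α β E F W : R}
    (hE : E = 8 * (α ^ 12 - 33 * α ^ 8 * β ^ 4 - 33 * α ^ 4 * β ^ 8 + β ^ 12))
    (hF : F = 4 * (α ^ 8 + 14 * α ^ 4 * β ^ 4 + β ^ 8))
    (hW : W = -(α ^ 4 - β ^ 4) ^ 2 ∨ W = -4 * α ^ 2 * β ^ 2 * (α ^ 2 + β ^ 2) ^ 2 ∨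
      W = 4 * α ^ 2 * β ^ 2 * (α ^ 2 - β ^ 2) ^ 2) :
    F ^ 3 - E ^ 2 = 108 * W ^ 2 * (F + 4 * W) := by
  subst hE hF
  rcases hW with rfl | rfl | rfl <;> ring

theorem xi_cubic_general (α β : ℂ)
    (V₁ V₂ V₃ E F J₀ ξ₁ ξ₂ ξ₃ : ℂ)
    (hV₁ : V₁ = 2 * Complex.I * α * β)
    (hV₂ : V₂ = Complex.I * (α ^ 2 - β ^ 2))
    (hV₃ : V₃ = α ^ 2 + β ^ 2)
    (hE : E = 8 * (α ^ 12 - 33 * α ^ 8 * β ^ 4 - 33 * α ^ 4 * β ^ 8 + β ^ 12))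
    (hF : F = 4 * (α ^ 8 + 14 * α ^ 4 * β ^ 4 + β ^ 8))
    (hJ : J₀ = F ^ 3 / E ^ 2)
    (hE0 : E ≠ 0) (hJ1 : J₀ ≠ 1)
    (hξ₁ : ξ₁ = F / (4 * (V₂ * V₃) ^ 2))
    (hξ₂ : ξ₂ = F / (4 * (V₁ * V₃) ^ 2))
    (hξ₃ : ξ₃ = F / (4 * (V₁ * V₂) ^ 2)) :
    ∀ ξ ∈ ({ξ₁, ξ₂, ξ₃} : Set ℂ),
      4 * ξ ^ 3 - (27 * J₀ / (J₀ - 1)) * ξ - 27 * J₀ / (J₀ - 1) = 0 := by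
  have hI : Complex.I ^ 2 = -1 := Complex.I_sq
  rintro ξ (rfl | rfl | rfl)
  · refine cubic_of_syzygy hE0 hJ hJ1 (octahedral_syzygy hE hF (.inl ?_)) hξ₁
    rw [hV₂, hV₃]
    linear_combination (α ^ 4 - β ^ 4) ^ 2 * hI
  · refine cubic_of_syzygy hE0 hJ hJ1 (octahedral_syzygy hE hF (.inr (.inl ?_))) hξ₂
    rw [hV₁, hV₃]
    linear_combination (4 * α ^ 2 * β ^ 2 * (α ^ 2 + β ^ 2) ^ 2) * hI
  · refine cubic_of_syzygy hE0 hJ hJ1 (octahedral_syzygy hE hF (.inr (.inr ?_))) hξ₃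
    rw [hV₁, hV₂]
    linear_combination (4 * α ^ 2 * β ^ 2 * (α ^ 2 - β ^ 2) ^ 2 * (Complex.I ^ 2 - 1)) * hI

theorem xi_cubic (α β : ℂ)
    (V₁ V₂ V₃ E F J₀ ξ₁ ξ₂ ξ₃ : ℂ)
    (hV₁ : V₁ = 2 * Complex.I * α * β)
    (hV₂ : V₂ = Complex.I * (α ^ 2 - β ^ 2))
    (hV₃ : V₃ = α ^ 2 + β ^ 2)
    (hE : E = 8 * (α ^ 12 - 33 * α ^ 8 * β ^ 4 - 33 * α ^ 4 * β ^ 8 + β ^ 12))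
    (hF : F = 4 * (α ^ 8 + 14 * α ^ 4 * β ^ 4 + β ^ 8))
    (hJ : J₀ = F ^ 3 / E ^ 2)
    (hE0 : E ≠ 0) (hJ1 : J₀ ≠ 1) (hV : V₁ * V₂ * V₃ ≠ 0)
    (hξ₁ : ξ₁ = F / (4 * (V₂ * V₃) ^ 2))
    (hξ₂ : ξ₂ = F / (4 * (V₁ * V₃) ^ 2))
    (hξ₃ : ξ₃ = F / (4 * (V₁ * V₂) ^ 2)) :
    ∀ ξ ∈ ({ξ₁, ξ₂, ξ₃} : Set ℂ),
      4 * ξ ^ 3 - (27 * J₀ / (J₀ - 1)) * ξ - 27 * J₀ / (J₀ - 1) = 0 :=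
  xi_cubic_general α β V₁ V₂ V₃ E F J₀ ξ₁ ξ₂ ξ₃ hV₁ hV₂ hV₃ hE hF hJ hE0 hJ1 hξ₁ hξ₂ hξ₃
end
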